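/- arXiv:2605.17396 — 5 statements merged into one kernel-verified Lean document; each statement's English description precedes it below -/
import Mathlib

section
/- Let F₁ and F₂ be edge sets of a hypergraph G such that F₁ ⊆ F₂ and every edge e ∈ F₂∖F₁ satisfies e ∩ V(F₁) ⊆ ∂(F₂). Then bw_G(F₁) ≤ bw_G(F₂). -/
open Finset

universe u

/-- Rooted binary trees whose leaves carry labels of type `α`.  Every node has
at most two children; each leaf carries the edge assigned to it, so the leaf
map `φ` is built into the tree. -/
inductive BTree (α : Type u) : Type u where
  | leaf : α → BTree α
  | node1 : BTree α → BTree α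
  | node2 : BTree α → BTree α → BTree α

namespace BTree

variable {α : Type u}

/-- The multiset of labels of the leaves of a tree. -/
def leafLabels : BTree α → Multiset α
  | leaf a => {a}
  | node1 c => leafLabels c
  | node2 c₁ c₂ => leafLabels c₁ + leafLabels c₂

/-- `s.Occurs t` : `s` is (the subtree rooted at) a node of `t`. -/
def Occurs (s : BTree α) : BTree α → Prop
  | leaf a => s = leaf a
  | node1 c => s = node1 c ∨ Occurs s c
  | node2 c₁ c₂ => s = node2 c₁ c₂ ∨ Occurs s c₁ ∨ Occurs s c₂

/-- A tree is full if every internal node has exactly two children. -/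
def IsFull : BTree α → Prop
  | leaf _ => True
  | node1 _ => False
  | node2 c₁ c₂ => IsFull c₁ ∧ IsFull c₂

/-- The list of all (subtrees rooted at) nodes of a tree. -/
def nodes : BTree α → List (BTree α)
  | leaf a => [leaf a]
  | node1 c => node1 c :: nodes c
  | node2 c₁ c₂ => node2 c₁ c₂ :: (nodes c₁ ++ nodes c₂)

end BTree

variable {V : Type u} [DecidableEq V] [Fintype V]

/-- `vtxs F` is `V(F)` : the union of the hyperedges in `F`. -/
def vtxs (F : Finset (Finset V)) : Finset V := F.sup id

/-- The boundary `∂(F) = V(F) ∩ V(E ∖ F)` of an edge set `F` of the hypergraph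
with edge set `E`. -/
def ebnd (E F : Finset (Finset V)) : Finset V := vtxs F ∩ vtxs (E \ F)

/-- `t` is a (relaxed) branch-decomposition of the edge set `F` : the set of
leaf labels is exactly `F`, i.e. the leaf map is a surjection onto `F`. -/
def IsBD (F : Finset (Finset V)) (t : BTree (Finset V)) : Prop :=
  t.leafLabels.toFinset = F

/-- The lower edge set `L(p)` of a node `p` : the edges assigned to the leaves
in the subtree rooted at `p`. -/
def lowerSet (p : BTree (Finset V)) : Finset (Finset V) := p.leafLabels.toFinset

/-- The upper edge set `U(p)` of a node `p` of a branch-decomposition `t` of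
`F` in the hypergraph with edge set `E` : the edges assigned to leaves outside
the subtree rooted at `p`, together with `E ∖ F`. -/
def upperSet (E F : Finset (Finset V)) (t p : BTree (Finset V)) : Finset (Finset V) :=
  (t.leafLabels - p.leafLabels).toFinset ∪ (E \ F)

/-- The middle set `V(L(p)) ∩ V(U(p))` of a node `p`. -/
def midSet (E F : Finset (Finset V)) (t p : BTree (Finset V)) : Finset V :=
  vtxs (lowerSet p) ∩ vtxs (upperSet E F t p)

/-- The width of a branch-decomposition: the maximum order of a node. -/
def bdWidth (E F : Finset (Finset V)) (t : BTree (Finset V)) : ℕ :=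
  (t.nodes.map (fun p => (midSet E F t p).card)).foldr max 0

/-- The branchwidth `bw_G(F)` of an edge set `F` of the hypergraph with edge
set `E` : the minimum width of a branch-decomposition of `F`. -/
noncomputable def ebw (E F : Finset (Finset V)) : ℕ :=
  sInf {w | ∃ t : BTree (Finset V), IsBD F t ∧ bdWidth E F t = w}

/-- The branchwidth of a hypergraph given by its edge set. -/
noncomputable def hbw (E : Finset (Finset V)) : ℕ := ebw E E

/-! Restrict an optimal branch-decomposition of `F₂` to the leaves labelled in `F₁`. Every node
`q` of the restriction comes from a node `p` of the original with `L(q) = L(p) ∩ F₁`, and the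
middle set of `q` lies in that of `p`: the only new upper edges are those of `F₂ ∖ F₁`, and a
vertex of `V(F₁)` on such an edge lies in `∂(F₂) ⊆ V(E ∖ F₂) ⊆ V(U(p))`. -/

namespace BTree

variable {α : Type*}

theorem leafLabels_ne_zero (t : BTree α) : t.leafLabels ≠ 0 := by
  induction t with
  | leaf a => simp [leafLabels]
  | node1 c ih => simpa [leafLabels] using ih
  | node2 c₁ c₂ ih₁ _ => simp [leafLabels, ih₁]

theorem mem_nodes_self (t : BTree α) : t ∈ t.nodes := by
  cases t <;> simp [nodes]

variable [DecidableEq α]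

def prune (F : Finset α) : BTree α → Option (BTree α)
  | leaf a => if a ∈ F then some (leaf a) else none
  | node1 c => prune F c
  | node2 c₁ c₂ => Option.merge node2 (prune F c₁) (prune F c₂)

theorem prune_elim_leafLabels (F : Finset α) (t : BTree α) :
    (prune F t).elim 0 leafLabels = t.leafLabels.filter (· ∈ F) := by
  induction t with
  | leaf a => by_cases ha : a ∈ F <;> simp [prune, leafLabels, ha, Multiset.filter_singleton]
  | node1 c ih => simpa [prune, leafLabels] using ih
  | node2 c₁ c₂ ih₁ ih₂ =>
    cases h₁ : prune F c₁ <;> cases h₂ : prune F c₂ <;>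
      simp_all [prune, leafLabels, Multiset.filter_add]

theorem leafLabels_of_prune_eq_some {F : Finset α} {t t' : BTree α} (h : prune F t = some t') :
    t'.leafLabels = t.leafLabels.filter (· ∈ F) := by
  simpa [h] using prune_elim_leafLabels F t

theorem exists_prune_eq_some {F : Finset α} {t : BTree α}
    (h : t.leafLabels.filter (· ∈ F) ≠ 0) : ∃ t', prune F t = some t' := by
  cases hp : prune F t with
  | none => simp [← prune_elim_leafLabels, hp] at h
  | some t' => exact ⟨t', rfl⟩

theorem exists_mem_nodes_of_prune_eq_some {F : Finset α} {t t' q : BTree α}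
    (h : prune F t = some t') (hq : q ∈ t'.nodes) :
    ∃ p ∈ t.nodes, q.leafLabels = p.leafLabels.filter (· ∈ F) := by
  induction t generalizing t' with
  | leaf a =>
    have hroot := leafLabels_of_prune_eq_some h
    by_cases ha : a ∈ F <;> simp only [prune, ha, ite_true, ite_false, reduceCtorEq,
      Option.some.injEq] at h
    subst h
    rw [nodes, List.mem_singleton] at hq
    exact ⟨leaf a, mem_nodes_self _, hq ▸ hroot⟩
  | node1 c ih => exact (ih h hq).imp fun p => And.imp_left (by simp +contextual [nodes])
  | node2 c₁ c₂ ih₁ ih₂ =>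
    have hroot := leafLabels_of_prune_eq_some h
    have lift₁ : ∀ p ∈ c₁.nodes, p ∈ (node2 c₁ c₂).nodes := by simp +contextual [nodes]
    have lift₂ : ∀ p ∈ c₂.nodes, p ∈ (node2 c₁ c₂).nodes := by simp +contextual [nodes]
    cases h₁ : prune F c₁ <;> cases h₂ : prune F c₂ <;>
      simp only [prune, h₁, h₂, Option.merge, reduceCtorEq, Option.some.injEq] at h <;> subst h
    · exact (ih₂ h₂ hq).imp fun p => And.imp_left (lift₂ p)
    · exact (ih₁ h₁ hq).imp fun p => And.imp_left (lift₁ p)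
    · simp only [nodes, List.mem_cons, List.mem_append] at hq
      rcases hq with rfl | hq | hq
      · exact ⟨_, mem_nodes_self _, hroot⟩
      · exact (ih₁ h₁ hq).imp fun p => And.imp_left (lift₁ p)
      · exact (ih₂ h₂ hq).imp fun p => And.imp_left (lift₂ p)

end BTree

section

variable {W : Type*} [DecidableEq W] {E F F' F₁ F₂ : Finset (Finset W)}
  {t t' p q : BTree (Finset W)}

theorem mem_vtxs {v : W} : v ∈ vtxs F ↔ ∃ e ∈ F, v ∈ e := by
  simp [vtxs]

theorem vtxs_mono (h : F₁ ⊆ F₂) : vtxs F₁ ⊆ vtxs F₂ :=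
  Finset.sup_mono h

theorem vtxs_union : vtxs (F₁ ∪ F₂) = vtxs F₁ ∪ vtxs F₂ :=
  Finset.sup_union

theorem IsBD.nonempty (ht : IsBD F t) : F.Nonempty := by
  rw [← ht, Multiset.toFinset_nonempty]
  exact t.leafLabels_ne_zero

theorem exists_isBD (hF : F.Nonempty) : ∃ t, IsBD F t := by
  induction hF using Finset.Nonempty.cons_induction with
  | singleton a => exact ⟨.leaf a, by simp [IsBD, BTree.leafLabels]⟩
  | cons a s _ _ ih =>
    obtain ⟨t, ht⟩ := ih
    exact ⟨.node2 (.leaf a) t, by rw [IsBD] at ht ⊢; simp [BTree.leafLabels, ht]⟩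

theorem IsBD.exists_prune_eq_some (ht : IsBD F₂ t) (h12 : F₁ ⊆ F₂) (hF₁ : F₁.Nonempty) :
    ∃ t', t.prune F₁ = some t' ∧ IsBD F₁ t' := by
  have hfilter : (t.leafLabels.filter (· ∈ F₁)).toFinset = F₁ := by
    rw [Multiset.toFinset_filter, ht, Finset.filter_mem_eq_inter, Finset.inter_eq_right.2 h12]
  obtain ⟨t', ht'⟩ := BTree.exists_prune_eq_some (F := F₁) (t := t) (by
    rw [← Multiset.toFinset_nonempty, hfilter]; exact hF₁)
  exact ⟨t', ht', by rw [IsBD, BTree.leafLabels_of_prune_eq_some ht', hfilter]⟩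

theorem upperSet_subset_of_leafLabels_eq_filter
    (ht : t'.leafLabels = t.leafLabels.filter (· ∈ F₁))
    (hq : q.leafLabels = p.leafLabels.filter (· ∈ F₁)) :
    upperSet E F₁ t' q ⊆ upperSet E F₂ t p ∪ (F₂ \ F₁) := by
  intro e
  simp only [upperSet, ht, hq, ← Multiset.filter_sub, Finset.mem_union, Multiset.mem_toFinset,
    Multiset.mem_filter, Finset.mem_sdiff]
  tauto

theorem vtxs_sdiff_inter_subset_ebnd (hbd : ∀ e ∈ F₂ \ F₁, e ∩ vtxs F₁ ⊆ ebnd E F₂) :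
    vtxs (F₂ \ F₁) ∩ vtxs F₁ ⊆ ebnd E F₂ := by
  intro v hv
  rw [Finset.mem_inter, mem_vtxs] at hv
  obtain ⟨⟨e, he, hve⟩, hv₁⟩ := hv
  exact hbd e he (Finset.mem_inter.2 ⟨hve, hv₁⟩)

theorem midSet_subset_of_leafLabels_eq_filter
    (hbd : ∀ e ∈ F₂ \ F₁, e ∩ vtxs F₁ ⊆ ebnd E F₂)
    (ht : t'.leafLabels = t.leafLabels.filter (· ∈ F₁))
    (hq : q.leafLabels = p.leafLabels.filter (· ∈ F₁)) :
    midSet E F₁ t' q ⊆ midSet E F₂ t p := by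
  have hlower : lowerSet q = (lowerSet p).filter (· ∈ F₁) := by
    rw [lowerSet, lowerSet, hq, Multiset.toFinset_filter]
  have hlower_p : vtxs (lowerSet q) ⊆ vtxs (lowerSet p) :=
    vtxs_mono (hlower ▸ Finset.filter_subset _ _)
  have hlower_F₁ : vtxs (lowerSet q) ⊆ vtxs F₁ :=
    vtxs_mono (hlower ▸ fun e he => (Finset.mem_filter.1 he).2)
  have hbnd : ebnd E F₂ ⊆ vtxs (upperSet E F₂ t p) :=
    Finset.inter_subset_right.trans (vtxs_mono Finset.subset_union_right)
  intro v hv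
  obtain ⟨hvl, hvu⟩ := Finset.mem_inter.1 hv
  have hvu' := vtxs_mono (upperSet_subset_of_leafLabels_eq_filter (E := E) (F₂ := F₂) ht hq) hvu
  rw [vtxs_union, Finset.mem_union] at hvu'
  refine Finset.mem_inter.2 ⟨hlower_p hvl, hvu'.elim id fun hv₂ => hbnd ?_⟩
  exact vtxs_sdiff_inter_subset_ebnd hbd (Finset.mem_inter.2 ⟨hv₂, hlower_F₁ hvl⟩)

theorem card_midSet_le_bdWidth (hp : p ∈ t.nodes) :
    (midSet E F t p).card ≤ bdWidth E F t :=
  List.le_max_of_le (List.mem_map_of_mem hp) le_rfl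

theorem bdWidth_le {w : ℕ}
    (h : ∀ p ∈ t.nodes, (midSet E F t p).card ≤ w) : bdWidth E F t ≤ w :=
  List.max_le_of_forall_le _ _ (by simpa using h)

theorem bdWidth_prune_le (hbd : ∀ e ∈ F₂ \ F₁, e ∩ vtxs F₁ ⊆ ebnd E F₂)
    (h : t.prune F₁ = some t') :
    bdWidth E F₁ t' ≤ bdWidth E F₂ t := by
  refine bdWidth_le fun q hq => ?_
  obtain ⟨p, hp, hqp⟩ := BTree.exists_mem_nodes_of_prune_eq_some h hq
  calc (midSet E F₁ t' q).card
      ≤ (midSet E F₂ t p).card := Finset.card_le_card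
        (midSet_subset_of_leafLabels_eq_filter hbd (BTree.leafLabels_of_prune_eq_some h) hqp)
    _ ≤ bdWidth E F₂ t := card_midSet_le_bdWidth hp

theorem ebw_empty : ebw E (∅ : Finset (Finset W)) = 0 := by
  rw [ebw, Nat.sInf_eq_zero]
  refine Or.inr (Set.eq_empty_of_forall_notMem ?_)
  rintro w ⟨t, ht, -⟩
  exact ht.nonempty.ne_empty rfl

theorem ebw_le_of_forall_isBD (hF : F.Nonempty)
    (h : ∀ t, IsBD F t → ∃ t', IsBD F' t' ∧ bdWidth E F' t' ≤ bdWidth E F t) :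
    ebw E F' ≤ ebw E F := by
  obtain ⟨t₀, ht₀⟩ := exists_isBD hF
  have hwidths : {w | ∃ t, IsBD F t ∧ bdWidth E F t = w}.Nonempty := ⟨_, t₀, ht₀, rfl⟩
  obtain ⟨t, ht, hw⟩ := Nat.sInf_mem hwidths
  obtain ⟨t', ht', hle⟩ := h t ht
  calc ebw E F' ≤ bdWidth E F' t' := Nat.sInf_le ⟨t', ht', rfl⟩
    _ ≤ bdWidth E F t := hle
    _ = ebw E F := hw

end

theorem bw_mono_of_bnd_general (E F₁ F₂ : Finset (Finset V)) (h12 : F₁ ⊆ F₂)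
    (hbd : ∀ e ∈ F₂ \ F₁, e ∩ vtxs F₁ ⊆ ebnd E F₂) :
    ebw E F₁ ≤ ebw E F₂ := by
  rcases F₁.eq_empty_or_nonempty with rfl | hF₁
  · simp [ebw_empty]
  refine ebw_le_of_forall_isBD (hF₁.mono h12) fun t ht => ?_
  obtain ⟨t', hprune, ht'⟩ := ht.exists_prune_eq_some h12 hF₁
  exact ⟨t', ht', bdWidth_prune_le hbd hprune⟩

/-- If `F₁ ⊆ F₂` and every edge of `F₂ ∖ F₁` intersects `V(F₁)` only in
`∂(F₂)`, then `bw(F₁) ≤ bw(F₂)`. -/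
theorem bw_mono_of_bnd (E F₁ F₂ : Finset (Finset V)) (hF₂E : F₂ ⊆ E)
    (hne : ∀ e ∈ E, e.Nonempty) (h12 : F₁ ⊆ F₂)
    (hbd : ∀ e ∈ F₂ \ F₁, e ∩ vtxs F₁ ⊆ ebnd E F₂) :
    ebw E F₁ ≤ ebw E F₂ :=
  bw_mono_of_bnd_general E F₁ F₂ h12 hbd
end

section
/- Let X₁ and X₂ be vertex sets of a hypergraph G. Then ∂(E(X₁) ∪ E(X₂)) is contained in ∂(X₁ ∪ X₂) ∪ V(F⁺(X₁, X₂)), where F⁺(X₁, X₂) = E(X₁ ∪ X₂) ∖ (E(X₁) ∪ E(X₂)). -/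
open Finset

universe u

variable {V : Type u} [DecidableEq V] [Fintype V]

/-- `E(X)` : the hyperedges contained in the vertex set `X`. -/
def edgesIn (E : Finset (Finset V)) (X : Finset V) : Finset (Finset V) :=
  E.filter (fun e => e ⊆ X)

/-- The boundary `∂(X)` of a vertex set `X` : the vertices of `X` having an
incident hyperedge meeting the complement of `X`. -/
def vbnd (E : Finset (Finset V)) (X : Finset V) : Finset V :=
  X.filter (fun x => ∃ e ∈ E, x ∈ e ∧ ¬ e ⊆ X)

/-- `∂(E(X₁) ∪ E(X₂)) ⊆ ∂(X₁ ∪ X₂) ∪ V(F⁺(X₁, X₂))`, where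
`F⁺(X₁, X₂) = E(X₁ ∪ X₂) ∖ (E(X₁) ∪ E(X₂))`. -/
theorem bnd_edgesIn_union_subset (E : Finset (Finset V))
    (hne : ∀ e ∈ E, e.Nonempty) (X₁ X₂ : Finset V) :
    ebnd E (edgesIn E X₁ ∪ edgesIn E X₂) ⊆
      vbnd E (X₁ ∪ X₂) ∪
        vtxs (edgesIn E (X₁ ∪ X₂) \ (edgesIn E X₁ ∪ edgesIn E X₂)) := by
  intro x hx
  simp only [ebnd, vtxs, mem_inter, mem_sup, id] at hx
  obtain ⟨⟨e, he, hxe⟩, ⟨f, hf, hxf⟩⟩ := hx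
  simp only [mem_sdiff, mem_union, edgesIn, mem_filter] at he hf
  have hxX : x ∈ X₁ ∪ X₂ := by
    rcases he with ⟨⟨_, h⟩⟩ | ⟨⟨_, h⟩⟩
    · exact mem_union_left _ (h hxe)
    · exact mem_union_right _ (h hxe)
  by_cases hsub : f ⊆ X₁ ∪ X₂
  · refine mem_union_right _ ?_
    simp only [vtxs, mem_sup, id]
    refine ⟨f, ?_, hxf⟩
    simp only [mem_sdiff, mem_union, edgesIn, mem_filter]
    exact ⟨⟨hf.1, hsub⟩, hf.2⟩
  · refine mem_union_left _ ?_
    simp only [vbnd, mem_filter]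
    exact ⟨hxX, f, hf.1, hxf, hsub⟩
end

section
/- Let S be a finite set and k a positive integer with |S| ≤ 3k/2, and let (S₁, S₂, S₃) be a subbicover of S. Then there exists a bicover of S of order at most k that extends (S₁, S₂, S₃) if and only if: (1) |Sᵢ| ≤ k for i = 1, 2, 3, and (2) |Sᵢ ∩ Sⱼ| + |S| ≤ 2k for all 1 ≤ i < j ≤ 3. -/
open Finset

variable {α : Type*} [DecidableEq α]

/-- `(S₁, S₂, S₃)` is a bicover of `S` : the three sets are subsets of `S` and
every element of `S` belongs to exactly two of them. -/
def IsBicover (S S₁ S₂ S₃ : Finset α) : Prop :=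
  S₁ ⊆ S ∧ S₂ ⊆ S ∧ S₃ ⊆ S ∧ ∀ x ∈ S,
    (if x ∈ S₁ then 1 else 0) + (if x ∈ S₂ then 1 else 0) +
      (if x ∈ S₃ then 1 else 0) = 2

/-- `(S₁, S₂, S₃)` is a subbicover of `S` : the three sets are subsets of `S`
and every element of `S` belongs to at most two of them. -/
def IsSubbicover (S S₁ S₂ S₃ : Finset α) : Prop :=
  S₁ ⊆ S ∧ S₂ ⊆ S ∧ S₃ ⊆ S ∧ ∀ x ∈ S,
    (if x ∈ S₁ then 1 else 0) + (if x ∈ S₂ then 1 else 0) +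
      (if x ∈ S₃ then 1 else 0) ≤ 2

private lemma card_eq_sum_ind (S A : Finset α) (hA : A ⊆ S) :
    (∑ x ∈ S, if x ∈ A then (1 : ℕ) else 0) = A.card := by
  rw [← Finset.card_filter, Finset.filter_mem_eq_inter, Finset.inter_eq_right.mpr hA]

private lemma sum_cnt (S S₁ S₂ S₃ : Finset α) (h1 : S₁ ⊆ S) (h2 : S₂ ⊆ S) (h3 : S₃ ⊆ S) :
    (∑ x ∈ S, ((if x ∈ S₁ then (1 : ℕ) else 0) + (if x ∈ S₂ then 1 else 0) +
      (if x ∈ S₃ then 1 else 0))) = S₁.card + S₂.card + S₃.card := by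
  rw [Finset.sum_add_distrib, Finset.sum_add_distrib,
    card_eq_sum_ind S S₁ h1, card_eq_sum_ind S S₂ h2, card_eq_sum_ind S S₃ h3]

private lemma step_one (S A B C : Finset α) (k : ℕ) (hS : 2 * S.card ≤ 3 * k)
    (hA : A ⊆ S) (hB : B ⊆ S) (hC : C ⊆ S)
    (hcnt : ∀ y ∈ S, (if y ∈ A then (1 : ℕ) else 0) + (if y ∈ B then 1 else 0) +
      (if y ∈ C then 1 else 0) ≤ 2)
    (hAk : A.card ≤ k) (hBk : B.card ≤ k) (hCk : C.card ≤ k)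
    (hAB : (A ∩ B).card + S.card ≤ 2 * k) (hBC : (B ∩ C).card + S.card ≤ 2 * k)
    (hAC : (A ∩ C).card + S.card ≤ 2 * k)
    (x : α) (hxS : x ∈ S) (hxA : x ∈ A) (hxB : x ∉ B) (hxC : x ∉ C) :
    ∃ B' C' : Finset α, B ⊆ B' ∧ C ⊆ C' ∧ B' ⊆ S ∧ C' ⊆ S ∧
      (∀ y ∈ S, (if y ∈ A then (1 : ℕ) else 0) + (if y ∈ B' then 1 else 0) +
        (if y ∈ C' then 1 else 0) ≤ 2) ∧
      B'.card ≤ k ∧ C'.card ≤ k ∧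
      (A ∩ B').card + S.card ≤ 2 * k ∧ (B' ∩ C').card + S.card ≤ 2 * k ∧
      (A ∩ C').card + S.card ≤ 2 * k ∧
      B'.card + C'.card = B.card + C.card + 1 := by
  have htriple : ∀ y, y ∈ A → y ∈ B → y ∈ C → False := by
    intro y hyA hyB hyC
    have := hcnt y (hA hyA)
    simp [hyA, hyB, hyC] at this
  have hScard : 1 ≤ S.card := Finset.card_pos.mpr ⟨x, hxS⟩
  have hkey : (B.card < k ∧ (A ∩ B).card + S.card < 2 * k) ∨
      (C.card < k ∧ (A ∩ C).card + S.card < 2 * k) := by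
    by_contra hcon
    push_neg at hcon
    obtain ⟨hc1, hc2⟩ := hcon
    have hb : B.card = k ∨ 2 * k ≤ (A ∩ B).card + S.card := by
      by_cases h : B.card < k
      · right; exact hc1 h
      · left; omega
    have hcC : C.card = k ∨ 2 * k ≤ (A ∩ C).card + S.card := by
      by_cases h : C.card < k
      · right; exact hc2 h
      · left; omega
    have herase : (S.erase x).card = S.card - 1 := Finset.card_erase_of_mem hxS
    rcases hb with hb | hb <;> rcases hcC with hcC | hcC
    · -- B.card = k and C.card = k
      have hsub : B ∪ C ⊆ S.erase x := by
        intro y hy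
        rcases Finset.mem_union.mp hy with h | h
        · exact Finset.mem_erase.mpr ⟨fun e => hxB (e ▸ h), hB h⟩
        · exact Finset.mem_erase.mpr ⟨fun e => hxC (e ▸ h), hC h⟩
      have h1 := Finset.card_le_card hsub
      have h2 := Finset.card_union_add_card_inter B C
      omega
    · -- B.card = k and 2k ≤ |A∩C| + |S|
      have hdisj : Disjoint B (A ∩ C) := by
        rw [Finset.disjoint_left]
        intro y hyB hyAC
        exact htriple y (Finset.mem_inter.mp hyAC).1 hyB (Finset.mem_inter.mp hyAC).2
      have hsub : B ∪ (A ∩ C) ⊆ S.erase x := by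
        intro y hy
        rcases Finset.mem_union.mp hy with h | h
        · exact Finset.mem_erase.mpr ⟨fun e => hxB (e ▸ h), hB h⟩
        · exact Finset.mem_erase.mpr
            ⟨fun e => hxC (e ▸ (Finset.mem_inter.mp h).2), hA (Finset.mem_inter.mp h).1⟩
      have h1 := Finset.card_le_card hsub
      have h2 := Finset.card_union_of_disjoint hdisj
      omega
    · -- 2k ≤ |A∩B| + |S| and C.card = k
      have hdisj : Disjoint C (A ∩ B) := by
        rw [Finset.disjoint_left]
        intro y hyC hyAB
        exact htriple y (Finset.mem_inter.mp hyAB).1 (Finset.mem_inter.mp hyAB).2 hyC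
      have hsub : C ∪ (A ∩ B) ⊆ S.erase x := by
        intro y hy
        rcases Finset.mem_union.mp hy with h | h
        · exact Finset.mem_erase.mpr ⟨fun e => hxC (e ▸ h), hC h⟩
        · exact Finset.mem_erase.mpr
            ⟨fun e => hxB (e ▸ (Finset.mem_inter.mp h).2), hA (Finset.mem_inter.mp h).1⟩
      have h1 := Finset.card_le_card hsub
      have h2 := Finset.card_union_of_disjoint hdisj
      omega
    · -- both intersection bounds tight
      have hdisj : Disjoint (A ∩ B) (A ∩ C) := by
        rw [Finset.disjoint_left]
        intro y hyAB hyAC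
        exact htriple y (Finset.mem_inter.mp hyAB).1 (Finset.mem_inter.mp hyAB).2
          (Finset.mem_inter.mp hyAC).2
      have hsub : (A ∩ B) ∪ (A ∩ C) ⊆ A.erase x := by
        intro y hy
        rcases Finset.mem_union.mp hy with h | h
        · exact Finset.mem_erase.mpr
            ⟨fun e => hxB (e ▸ (Finset.mem_inter.mp h).2), (Finset.mem_inter.mp h).1⟩
        · exact Finset.mem_erase.mpr
            ⟨fun e => hxC (e ▸ (Finset.mem_inter.mp h).2), (Finset.mem_inter.mp h).1⟩
      have h1 := Finset.card_le_card hsub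
      have h2 := Finset.card_union_of_disjoint hdisj
      have h3 : (A.erase x).card = A.card - 1 := Finset.card_erase_of_mem hxA
      have h4 : 1 ≤ A.card := Finset.card_pos.mpr ⟨x, hxA⟩
      omega
  rcases hkey with ⟨hBk', hAB'⟩ | ⟨hCk', hAC'⟩
  · refine ⟨insert x B, C, Finset.subset_insert _ _, subset_rfl,
      Finset.insert_subset hxS hB, hC, ?_, ?_, hCk, ?_, ?_, hAC, ?_⟩
    · intro y hy
      by_cases hyx : y = x
      · subst hyx; simp [hxA, hxC, Finset.mem_insert]
      · simpa [Finset.mem_insert, hyx] using hcnt y hy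
    · rw [Finset.card_insert_of_notMem hxB]; omega
    · rw [Finset.inter_insert_of_mem hxA,
        Finset.card_insert_of_notMem (fun h => hxB (Finset.mem_inter.mp h).2)]
      omega
    · rw [Finset.insert_inter_of_notMem hxC]; exact hBC
    · rw [Finset.card_insert_of_notMem hxB]; omega
  · refine ⟨B, insert x C, subset_rfl, Finset.subset_insert _ _,
      hB, Finset.insert_subset hxS hC, ?_, hBk, ?_, hAB, ?_, ?_, ?_⟩
    · intro y hy
      by_cases hyx : y = x
      · subst hyx; simp [hxA, hxB, Finset.mem_insert]
      · simpa [Finset.mem_insert, hyx] using hcnt y hy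
    · rw [Finset.card_insert_of_notMem hxC]; omega
    · rw [Finset.inter_insert_of_notMem hxB]; exact hBC
    · rw [Finset.inter_insert_of_mem hxA,
        Finset.card_insert_of_notMem (fun h => hxC (Finset.mem_inter.mp h).2)]
      omega
    · rw [Finset.card_insert_of_notMem hxC]; omega

private lemma extend_aux (S : Finset α) (k : ℕ) (hS : 2 * S.card ≤ 3 * k) :
    ∀ n (S₁ S₂ S₃ : Finset α), S₁ ⊆ S → S₂ ⊆ S → S₃ ⊆ S →
    (∀ x ∈ S, (if x ∈ S₁ then (1 : ℕ) else 0) + (if x ∈ S₂ then 1 else 0) +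
      (if x ∈ S₃ then 1 else 0) ≤ 2) →
    2 * S.card ≤ S₁.card + S₂.card + S₃.card + n →
    S₁.card ≤ k → S₂.card ≤ k → S₃.card ≤ k →
    (S₁ ∩ S₂).card + S.card ≤ 2 * k →
    (S₂ ∩ S₃).card + S.card ≤ 2 * k →
    (S₁ ∩ S₃).card + S.card ≤ 2 * k →
    ∃ R₁ R₂ R₃ : Finset α, IsBicover S R₁ R₂ R₃ ∧ S₁ ⊆ R₁ ∧ S₂ ⊆ R₂ ∧ S₃ ⊆ R₃ ∧
      R₁.card ≤ k ∧ R₂.card ≤ k ∧ R₃.card ≤ k := by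
  intro n
  induction n with
  | zero =>
    intro S₁ S₂ S₃ h1 h2 h3 hcnt hsum hk1 hk2 hk3 _ _ _
    refine ⟨S₁, S₂, S₃, ⟨h1, h2, h3, ?_⟩, subset_rfl, subset_rfl, subset_rfl, hk1, hk2, hk3⟩
    have hsumeq := sum_cnt S S₁ S₂ S₃ h1 h2 h3
    have key : ∀ x ∈ S, 2 ≤ (if x ∈ S₁ then (1 : ℕ) else 0) + (if x ∈ S₂ then 1 else 0) +
        (if x ∈ S₃ then 1 else 0) := by
      by_contra h
      push_neg at h
      obtain ⟨x, hx, hlt⟩ := h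
      have e1 : ((if x ∈ S₁ then (1 : ℕ) else 0) + (if x ∈ S₂ then 1 else 0) +
          (if x ∈ S₃ then 1 else 0)) + ∑ y ∈ S.erase x, ((if y ∈ S₁ then (1 : ℕ) else 0) +
          (if y ∈ S₂ then 1 else 0) + (if y ∈ S₃ then 1 else 0)) =
          ∑ y ∈ S, ((if y ∈ S₁ then (1 : ℕ) else 0) +
          (if y ∈ S₂ then 1 else 0) + (if y ∈ S₃ then 1 else 0)) :=
        Finset.add_sum_erase S (fun y => (if y ∈ S₁ then (1 : ℕ) else 0) +
          (if y ∈ S₂ then 1 else 0) + (if y ∈ S₃ then 1 else 0)) hx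
      have e2 : (∑ y ∈ S.erase x, ((if y ∈ S₁ then (1 : ℕ) else 0) +
          (if y ∈ S₂ then 1 else 0) + (if y ∈ S₃ then 1 else 0))) ≤ (S.erase x).card * 2 := by
        have := Finset.sum_le_card_nsmul (S.erase x) (fun y => (if y ∈ S₁ then (1 : ℕ) else 0) +
          (if y ∈ S₂ then 1 else 0) + (if y ∈ S₃ then 1 else 0)) 2
          (fun y hy => hcnt y (Finset.mem_of_mem_erase hy))
        simpa using this
      have e3 : (S.erase x).card = S.card - 1 := Finset.card_erase_of_mem hx
      have e4 : 1 ≤ S.card := Finset.card_pos.mpr ⟨x, hx⟩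
      omega
    intro x hx
    have := key x hx
    have := hcnt x hx
    omega
  | succ n ih =>
    intro S₁ S₂ S₃ h1 h2 h3 hcnt hsum hk1 hk2 hk3 hAB hBC hAC
    by_cases hc : 2 * S.card ≤ S₁.card + S₂.card + S₃.card
    · exact ih S₁ S₂ S₃ h1 h2 h3 hcnt (by omega) hk1 hk2 hk3 hAB hBC hAC
    · obtain ⟨x, hx, hdef⟩ : ∃ x ∈ S, (if x ∈ S₁ then (1 : ℕ) else 0) +
          (if x ∈ S₂ then 1 else 0) + (if x ∈ S₃ then 1 else 0) ≤ 1 := by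
        by_contra h
        push_neg at h
        have hle : 2 * S.card ≤ ∑ x ∈ S, ((if x ∈ S₁ then (1 : ℕ) else 0) +
            (if x ∈ S₂ then 1 else 0) + (if x ∈ S₃ then 1 else 0)) := by
          have := Finset.card_nsmul_le_sum S (fun y => (if y ∈ S₁ then (1 : ℕ) else 0) +
            (if y ∈ S₂ then 1 else 0) + (if y ∈ S₃ then 1 else 0)) 2 (fun y hy => h y hy)
          simpa [mul_comm] using this
        rw [sum_cnt S S₁ S₂ S₃ h1 h2 h3] at hle
        exact hc hle
      by_cases m1 : x ∈ S₁ <;> by_cases m2 : x ∈ S₂ <;> by_cases m3 : x ∈ S₃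
      · simp [m1, m2, m3] at hdef
      · simp [m1, m2, m3] at hdef
      · simp [m1, m2, m3] at hdef
      · -- x ∈ S₁ only
        obtain ⟨B', C', hBB', hCC', hB'S, hC'S, hcnt', hB'k, hC'k, hAB', hB'C', hAC', hsum'⟩ :=
          step_one S S₁ S₂ S₃ k hS h1 h2 h3 hcnt hk1 hk2 hk3 hAB hBC hAC x hx m1 m2 m3
        obtain ⟨R₁, R₂, R₃, hbc, r1, r2, r3, c1, c2, c3⟩ :=
          ih S₁ B' C' h1 hB'S hC'S hcnt' (by omega) hk1 hB'k hC'k hAB' hB'C' hAC'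
        exact ⟨R₁, R₂, R₃, hbc, r1, hBB'.trans r2, hCC'.trans r3, c1, c2, c3⟩
      · simp [m1, m2, m3] at hdef
      · -- x ∈ S₂ only
        obtain ⟨B', C', hBB', hCC', hB'S, hC'S, hcnt', hB'k, hC'k, hAB', hB'C', hAC', hsum'⟩ :=
          step_one S S₂ S₁ S₃ k hS h2 h1 h3
            (fun y hy => by have := hcnt y hy; omega)
            hk2 hk1 hk3 (by rwa [Finset.inter_comm]) hAC hBC x hx m2 m1 m3
        obtain ⟨R₂', R₁', R₃', hbc', r2, r1, r3, c2, c1, c3⟩ :=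
          ih S₂ B' C' h2 hB'S hC'S hcnt' (by omega) hk2 hB'k hC'k hAB' hB'C' hAC'
        obtain ⟨hs1, hs2, hs3, hpt⟩ := hbc'
        refine ⟨R₁', R₂', R₃', ⟨hs2, hs1, hs3, fun y hy => by have := hpt y hy; omega⟩,
          hBB'.trans r1, r2, hCC'.trans r3, c1, c2, c3⟩
      · -- x ∈ S₃ only
        obtain ⟨B', C', hBB', hCC', hB'S, hC'S, hcnt', hB'k, hC'k, hAB', hB'C', hAC', hsum'⟩ :=
          step_one S S₃ S₁ S₂ k hS h3 h1 h2
            (fun y hy => by have := hcnt y hy; omega)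
            hk3 hk1 hk2 (by rwa [Finset.inter_comm]) hAB (by rwa [Finset.inter_comm]) x hx m3 m1 m2
        obtain ⟨R₃', R₁', R₂', hbc', r3, r1, r2, c3, c1, c2⟩ :=
          ih S₃ B' C' h3 hB'S hC'S hcnt' (by omega) hk3 hB'k hC'k hAB' hB'C' hAC'
        obtain ⟨hs3, hs1, hs2, hpt⟩ := hbc'
        refine ⟨R₁', R₂', R₃', ⟨hs1, hs2, hs3, fun y hy => by have := hpt y hy; omega⟩,
          hBB'.trans r1, hCC'.trans r2, r3, c1, c2, c3⟩
      · -- x in none of them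
        have hone : S₁.card < k ∨ S₂.card < k ∨ S₃.card < k := by
          by_contra h
          push_neg at h
          omega
        rcases hone with hlt | hlt | hlt
        · obtain ⟨R₁, R₂, R₃, hbc, r1, r2, r3, c1, c2, c3⟩ :=
            ih (insert x S₁) S₂ S₃ (Finset.insert_subset hx h1) h2 h3
              (fun y hy => by
                by_cases hyx : y = x
                · subst hyx; simp [m2, m3, Finset.mem_insert]
                · simpa [Finset.mem_insert, hyx] using hcnt y hy)
              (by rw [Finset.card_insert_of_notMem m1]; omega)
              (by rw [Finset.card_insert_of_notMem m1]; omega) hk2 hk3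
              (by rwa [Finset.insert_inter_of_notMem m2]) hBC
              (by rwa [Finset.insert_inter_of_notMem m3])
          exact ⟨R₁, R₂, R₃, hbc, (Finset.subset_insert _ _).trans r1, r2, r3, c1, c2, c3⟩
        · obtain ⟨R₁, R₂, R₃, hbc, r1, r2, r3, c1, c2, c3⟩ :=
            ih S₁ (insert x S₂) S₃ h1 (Finset.insert_subset hx h2) h3
              (fun y hy => by
                by_cases hyx : y = x
                · subst hyx; simp [m1, m3, Finset.mem_insert]
                · simpa [Finset.mem_insert, hyx] using hcnt y hy)
              (by rw [Finset.card_insert_of_notMem m2]; omega) hk1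
              (by rw [Finset.card_insert_of_notMem m2]; omega) hk3
              (by rwa [Finset.inter_insert_of_notMem m1])
              (by rwa [Finset.insert_inter_of_notMem m3]) hAC
          exact ⟨R₁, R₂, R₃, hbc, r1, (Finset.subset_insert _ _).trans r2, r3, c1, c2, c3⟩
        · obtain ⟨R₁, R₂, R₃, hbc, r1, r2, r3, c1, c2, c3⟩ :=
            ih S₁ S₂ (insert x S₃) h1 h2 (Finset.insert_subset hx h3)
              (fun y hy => by
                by_cases hyx : y = x
                · subst hyx; simp [m1, m2, Finset.mem_insert]
                · simpa [Finset.mem_insert, hyx] using hcnt y hy)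
              (by rw [Finset.card_insert_of_notMem m3]; omega) hk1 hk2
              (by rw [Finset.card_insert_of_notMem m3]; omega) hAB
              (by rwa [Finset.inter_insert_of_notMem m2])
              (by rwa [Finset.inter_insert_of_notMem m1])
          exact ⟨R₁, R₂, R₃, hbc, r1, r2, (Finset.subset_insert _ _).trans r3, c1, c2, c3⟩

/-- For `|S| ≤ 3k/2`, a subbicover `(S₁, S₂, S₃)` of `S` extends to a bicover
of `S` of order at most `k` iff `|Sᵢ| ≤ k` for each `i` and
`|Sᵢ ∩ Sⱼ| + |S| ≤ 2k` for all `i < j`. -/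
theorem bicover_extension_iff (S S₁ S₂ S₃ : Finset α) (k : ℕ) (hk : 0 < k)
    (hS : 2 * S.card ≤ 3 * k) (hsub : IsSubbicover S S₁ S₂ S₃) :
    (∃ R₁ R₂ R₃ : Finset α, IsBicover S R₁ R₂ R₃ ∧
        S₁ ⊆ R₁ ∧ S₂ ⊆ R₂ ∧ S₃ ⊆ R₃ ∧
        max (max R₁.card R₂.card) R₃.card ≤ k) ↔
      ((S₁.card ≤ k ∧ S₂.card ≤ k ∧ S₃.card ≤ k) ∧
        ((S₁ ∩ S₂).card + S.card ≤ 2 * k ∧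
          (S₂ ∩ S₃).card + S.card ≤ 2 * k ∧
          (S₁ ∩ S₃).card + S.card ≤ 2 * k)) := by
  obtain ⟨hs1, hs2, hs3, hscnt⟩ := hsub
  constructor
  · rintro ⟨R₁, R₂, R₃, ⟨hR1, hR2, hR3, hRcnt⟩, hr1, hr2, hr3, hmax⟩
    simp only [max_le_iff] at hmax
    obtain ⟨⟨hm1, hm2⟩, hm3⟩ := hmax
    have cov : ∀ (A B C : Finset α), A ⊆ S → B ⊆ S →
        (∀ x ∈ S, x ∈ A ∨ x ∈ B) → (A ∩ B).card + S.card = A.card + B.card := by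
      intro A B C hAS hBS hcov
      have hU : A ∪ B = S := by
        refine subset_antisymm (Finset.union_subset hAS hBS) (fun y hy => ?_)
        exact Finset.mem_union.mpr (hcov y hy)
      have := Finset.card_union_add_card_inter A B
      rw [hU] at this
      omega
    have cov12 : ∀ x ∈ S, x ∈ R₁ ∨ x ∈ R₂ := by
      intro x hx
      have := hRcnt x hx
      by_contra h
      push_neg at h
      simp [h.1, h.2] at this
      split at this <;> omega
    have cov23 : ∀ x ∈ S, x ∈ R₂ ∨ x ∈ R₃ := by
      intro x hx
      have := hRcnt x hx
      by_contra h
      push_neg at h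
      simp [h.1, h.2] at this
      split at this <;> omega
    have cov13 : ∀ x ∈ S, x ∈ R₁ ∨ x ∈ R₃ := by
      intro x hx
      have := hRcnt x hx
      by_contra h
      push_neg at h
      simp [h.1, h.2] at this
      split at this <;> omega
    have e12 := cov R₁ R₂ R₃ hR1 hR2 cov12
    have e23 := cov R₂ R₃ R₁ hR2 hR3 cov23
    have e13 := cov R₁ R₃ R₂ hR1 hR3 cov13
    have i12 : (S₁ ∩ S₂).card ≤ (R₁ ∩ R₂).card :=
      Finset.card_le_card (Finset.inter_subset_inter hr1 hr2)
    have i23 : (S₂ ∩ S₃).card ≤ (R₂ ∩ R₃).card :=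
      Finset.card_le_card (Finset.inter_subset_inter hr2 hr3)
    have i13 : (S₁ ∩ S₃).card ≤ (R₁ ∩ R₃).card :=
      Finset.card_le_card (Finset.inter_subset_inter hr1 hr3)
    have k1 := Finset.card_le_card hr1
    have k2 := Finset.card_le_card hr2
    have k3 := Finset.card_le_card hr3
    exact ⟨⟨by omega, by omega, by omega⟩, by omega, by omega, by omega⟩
  · rintro ⟨⟨hk1, hk2, hk3⟩, hAB, hBC, hAC⟩
    obtain ⟨R₁, R₂, R₃, hbc, r1, r2, r3, c1, c2, c3⟩ :=
      extend_aux S k hS (2 * S.card) S₁ S₂ S₃ hs1 hs2 hs3 hscnt (by omega)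
        hk1 hk2 hk3 hAB hBC hAC
    exact ⟨R₁, R₂, R₃, hbc, r1, r2, r3, by simp [c1, c2, c3]⟩
end

section
/- Let G be a graph on n vertices and let b and c be positive integers. Then the number of vertex subsets C of G such that the subgraph induced by C is connected, |C| = c, and |N_G(C)| = b is at most n · binom(b + c − 1, b). -/
open Finset

universe u

variable {V : Type u} [DecidableEq V] [Fintype V]

/-- The open neighbourhood `N_G(C)` of a vertex set `C` : the vertices outside
`C` adjacent to some vertex of `C`. -/
def gnbr (G : SimpleGraph V) [DecidableRel G.Adj] (C : Finset V) : Finset V :=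
  Finset.univ.filter (fun y => y ∉ C ∧ ∃ x ∈ C, G.Adj x y)

/-!
Fix a vertex `v ∈ C` and explore `C` from `v`: repeatedly pick an unclassified neighbour of the
vertices found so far and classify it as inside (it lies in `C`) or outside (it lies in `N(C)`).
Each step classifies one new vertex, and connectivity of `C` keeps the process going until all
of `C ∪ N(C)` is classified, i.e. for `b + c - 1` steps, exactly `b` of which are outside steps.
The run is determined by the set of its outside steps alone, so `C` is determined by `v` and a
`b`-subset of the `b + c - 1` steps; summing over `v` gives the bound.
-/

section Neighbourhood

variable (G : SimpleGraph V) [DecidableRel G.Adj]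

@[simp]
lemma mem_gnbr {C : Finset V} {y : V} : y ∈ gnbr G C ↔ y ∉ C ∧ ∃ x ∈ C, G.Adj x y := by
  simp [gnbr]

lemma mem_gnbr_of_subset {A C : Finset V} {y : V} (hy : y ∈ gnbr G A) (hAC : A ⊆ C)
    (hyC : y ∉ C) : y ∈ gnbr G C := by
  obtain ⟨-, x, hx, hxy⟩ := (mem_gnbr G).1 hy
  exact (mem_gnbr G).2 ⟨hyC, x, hAC hx, hxy⟩

lemma inter_gnbr_nonempty_of_connected {A C : Finset V}
    (hC : (G.induce (C : Set V)).Connected) (hA : A.Nonempty) (hAC : A ⊆ C) (hCA : ¬ C ⊆ A) :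
    (C ∩ gnbr G A).Nonempty := by
  obtain ⟨a, ha⟩ := hA
  obtain ⟨z, hzC, hzA⟩ := not_subset.1 hCA
  obtain ⟨p⟩ := hC.preconnected ⟨a, hAC ha⟩ ⟨z, hzC⟩
  obtain ⟨d, -, hd₁, hd₂⟩ := p.exists_boundary_dart {w | (w : V) ∈ A} ha hzA
  exact ⟨d.snd, mem_inter.2 ⟨d.snd.2, (mem_gnbr G).2 ⟨hd₂, d.fst, hd₁, d.adj⟩⟩⟩

lemma gnbr_sdiff_nonempty {A B C : Finset V} (hC : (G.induce (C : Set V)).Connected)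
    (hA : A.Nonempty) (hAC : A ⊆ C) (hBC : B ⊆ gnbr G C)
    (hcard : A.card + B.card < C.card + (gnbr G C).card) :
    (gnbr G A \ B).Nonempty := by
  by_cases hCA : C ⊆ A
  · obtain rfl : A = C := hAC.antisymm hCA
    have hB : B ⊂ gnbr G A := ssubset_of_subset_of_ne hBC (by rintro rfl; omega)
    exact sdiff_nonempty.2 (not_subset_of_ssubset hB)
  · obtain ⟨y, hy⟩ := inter_gnbr_nonempty_of_connected G hC hA hAC hCA
    obtain ⟨hyC, hyA⟩ := mem_inter.1 hy
    exact ⟨y, mem_sdiff.2 ⟨hyA, fun hyB => ((mem_gnbr G).1 (hBC hyB)).1 hyC⟩⟩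

end Neighbourhood

section Exploration

variable (G : SimpleGraph V) [DecidableRel G.Adj]

/-- States are pairs `(inside, outside)` of classified vertices. -/
noncomputable def exploreStep (p : V → Bool) (s : Finset V × Finset V) : Finset V × Finset V :=
  if h : (gnbr G s.1 \ s.2).Nonempty then
    if p (Classical.choose h) then (insert (Classical.choose h) s.1, s.2)
    else (s.1, insert (Classical.choose h) s.2)
  else s

noncomputable def explore (p : ℕ → V → Bool) (s : Finset V × Finset V) :
    ℕ → Finset V × Finset V
  | 0 => s
  | k + 1 => exploreStep G (p k) (explore p s k)

noncomputable def outsideSteps (p : ℕ → V → Bool) (s : Finset V × Finset V) (m : ℕ) :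
    Finset ℕ :=
  (range m).filter fun k => (explore G p s (k + 1)).2 ≠ (explore G p s k).2

lemma card_exploreStep (p : V → Bool) {s : Finset V × Finset V}
    (h : (gnbr G s.1 \ s.2).Nonempty) :
    (exploreStep G p s).1.card + (exploreStep G p s).2.card = s.1.card + s.2.card + 1 := by
  obtain ⟨hy₁, hy₂⟩ := mem_sdiff.1 (Classical.choose_spec h)
  have hy₁ : Classical.choose h ∉ s.1 := ((mem_gnbr G).1 hy₁).1
  unfold exploreStep
  split_ifs <;> simp [card_insert_of_notMem, *] <;> omega

lemma fst_subset_exploreStep_fst (p : V → Bool) (s : Finset V × Finset V) :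
    s.1 ⊆ (exploreStep G p s).1 := by
  unfold exploreStep
  split_ifs <;> simp [subset_insert]

lemma fst_subset_explore_fst (p : ℕ → V → Bool) (s : Finset V × Finset V) (k : ℕ) :
    s.1 ⊆ (explore G p s k).1 := by
  induction k with
  | zero => rfl
  | succ k ih => exact ih.trans (fst_subset_exploreStep_fst G (p k) _)

lemma card_exploreStep_snd (p : V → Bool) (s : Finset V × Finset V) :
    (exploreStep G p s).2.card = s.2.card + if (exploreStep G p s).2 = s.2 then 0 else 1 := by
  unfold exploreStep
  split_ifs <;> simp_all [card_insert_of_notMem]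

lemma exploreStep_decide_snd_eq (p : V → Bool) (s : Finset V × Finset V) :
    exploreStep G (fun _ => decide ((exploreStep G p s).2 = s.2)) s = exploreStep G p s := by
  unfold exploreStep
  by_cases h : (gnbr G s.1 \ s.2).Nonempty
  · have hy := (mem_sdiff.1 (Classical.choose_spec h)).2
    cases hp : p (Classical.choose h) <;> simp [h, hp, hy]
  · simp [h]

lemma explore_outsideSteps (p : ℕ → V → Bool) (s : Finset V × Finset V) {m k : ℕ}
    (hk : k ≤ m) :
    explore G (fun k _ => decide (k ∉ outsideSteps G p s m)) s k = explore G p s k := by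
  induction k with
  | zero => rfl
  | succ k ih =>
    have hmem : k ∉ outsideSteps G p s m ↔ (explore G p s (k + 1)).2 = (explore G p s k).2 := by
      simp [outsideSteps, show k < m by omega]
    simp only [explore, ih (by omega), hmem]
    exact exploreStep_decide_snd_eq G (p k) (explore G p s k)

lemma card_explore_snd (p : ℕ → V → Bool) (s : Finset V × Finset V) (m : ℕ) :
    (explore G p s m).2.card = s.2.card + (outsideSteps G p s m).card := by
  induction m with
  | zero => rfl
  | succ m ih =>
    have hsteps : outsideSteps G p s (m + 1) = if (explore G p s (m + 1)).2 ≠ (explore G p s m).2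
        then insert m (outsideSteps G p s m) else outsideSteps G p s m := by
      rw [outsideSteps, range_add_one, filter_insert, ← outsideSteps]
    rw [hsteps, explore, card_exploreStep_snd, ih, ← explore]
    split_ifs <;> simp_all [outsideSteps]
    omega

end Exploration

section Guided

variable (G : SimpleGraph V) [DecidableRel G.Adj] {C : Finset V}

lemma exploreStep_mem_subset {s : Finset V × Finset V} (h₁ : s.1 ⊆ C)
    (h₂ : s.2 ⊆ gnbr G C) :
    (exploreStep G (· ∈ C) s).1 ⊆ C ∧ (exploreStep G (· ∈ C) s).2 ⊆ gnbr G C := by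
  unfold exploreStep
  split_ifs with h hy
  · exact ⟨insert_subset (by simpa using hy) h₁, h₂⟩
  · have hy' := (mem_sdiff.1 (Classical.choose_spec h)).1
    exact ⟨h₁, insert_subset (mem_gnbr_of_subset G hy' h₁ (by simpa using hy)) h₂⟩
  · exact ⟨h₁, h₂⟩

lemma explore_mem_subset {s : Finset V × Finset V} (h₁ : s.1 ⊆ C) (h₂ : s.2 ⊆ gnbr G C)
    (k : ℕ) :
    (explore G (fun _ => (· ∈ C)) s k).1 ⊆ C ∧
      (explore G (fun _ => (· ∈ C)) s k).2 ⊆ gnbr G C := by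
  induction k with
  | zero => exact ⟨h₁, h₂⟩
  | succ k ih => exact exploreStep_mem_subset G ih.1 ih.2

lemma card_explore_mem (hC : (G.induce (C : Set V)).Connected) {v : V} (hv : v ∈ C) {k : ℕ}
    (hk : k < C.card + (gnbr G C).card) :
    (explore G (fun _ => (· ∈ C)) ({v}, ∅) k).1.card +
      (explore G (fun _ => (· ∈ C)) ({v}, ∅) k).2.card = k + 1 := by
  induction k with
  | zero => rfl
  | succ k ih =>
    have hsub :=
      explore_mem_subset G (s := ({v}, ∅)) (singleton_subset_iff.2 hv) (empty_subset _) k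
    have hne : (explore G (fun _ => (· ∈ C)) ({v}, ∅) k).1.Nonempty :=
      ⟨v, fst_subset_explore_fst G _ ({v}, ∅) k (mem_singleton_self v)⟩
    rw [explore, card_exploreStep G _ (gnbr_sdiff_nonempty G hC hne hsub.1 hsub.2 (by omega)),
      ih (by omega)]

lemma explore_mem_eq (hC : (G.induce (C : Set V)).Connected) {v : V} (hv : v ∈ C) {k : ℕ}
    (hk : k + 1 = C.card + (gnbr G C).card) :
    explore G (fun _ => (· ∈ C)) ({v}, ∅) k = (C, gnbr G C) := by
  have hsub := explore_mem_subset G (s := ({v}, ∅)) (singleton_subset_iff.2 hv) (empty_subset _) k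
  have hcard := card_explore_mem G hC hv (k := k) (by omega)
  have h₁ := card_le_card hsub.1
  have h₂ := card_le_card hsub.2
  refine Prod.ext (eq_of_subset_of_card_le hsub.1 ?_) (eq_of_subset_of_card_le hsub.2 ?_) <;>
    dsimp only <;> omega

end Guided

theorem ncard_connected_mem_le (G : SimpleGraph V) [DecidableRel G.Adj] (v : V) (b c : ℕ) :
    {C : Finset V | v ∈ C ∧ (G.induce (C : Set V)).Connected ∧ C.card = c ∧
        (gnbr G C).card = b}.ncard ≤ (b + c - 1).choose b := by
  set m := b + c - 1
  let code : Finset V → Finset ℕ := fun C => outsideSteps G (fun _ => (· ∈ C)) ({v}, ∅) m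
  have decode : ∀ C : Finset V, v ∈ C → (G.induce (C : Set V)).Connected →
      m + 1 = C.card + (gnbr G C).card →
      explore G (fun k _ => decide (k ∉ code C)) ({v}, ∅) m = (C, gnbr G C) := fun C hv hC hm =>
    (explore_outsideSteps G _ _ le_rfl).trans (explore_mem_eq G hC hv hm)
  calc _ ≤ (((range m).powersetCard b : Finset (Finset ℕ)) : Set (Finset ℕ)).ncard := by
        refine Set.ncard_le_ncard_of_injOn code ?_ ?_
        · rintro C ⟨hv, hC, rfl, rfl⟩
          have hcard := card_explore_snd G (fun _ => (· ∈ C)) ({v}, ∅) m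
          rw [explore_mem_eq G hC hv (by have := card_pos.2 ⟨v, hv⟩; omega)] at hcard
          exact mem_powersetCard.2 ⟨filter_subset _ _, by simpa using hcard.symm⟩
        · rintro C₁ ⟨hv₁, hC₁, hc₁, hb₁⟩ C₂ ⟨hv₂, hC₂, hc₂, hb₂⟩ hcode
          have h₁ := decode C₁ hv₁ hC₁ (by have := card_pos.2 ⟨v, hv₁⟩; omega)
          have h₂ := decode C₂ hv₂ hC₂ (by have := card_pos.2 ⟨v, hv₂⟩; omega)
          rw [hcode, h₂] at h₁
          exact (congrArg Prod.fst h₁).symm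
    _ = (b + c - 1).choose b := by rw [Set.ncard_coe_finset, card_powersetCard, card_range]

theorem connected_subsets_count_general (G : SimpleGraph V) [DecidableRel G.Adj]
    (b c : ℕ) :
    {C : Finset V | (G.induce ((C : Finset V) : Set V)).Connected ∧
        C.card = c ∧ (gnbr G C).card = b}.ncard ≤
      Fintype.card V * Nat.choose (b + c - 1) b := by
  have hcover : {C : Finset V | (G.induce ((C : Finset V) : Set V)).Connected ∧
      C.card = c ∧ (gnbr G C).card = b} ⊆ ⋃ v, {C : Finset V | v ∈ C ∧
        (G.induce (C : Set V)).Connected ∧ C.card = c ∧ (gnbr G C).card = b} := by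
    rintro C ⟨hC, hc, hb⟩
    obtain ⟨⟨v, hv⟩⟩ := hC.nonempty
    exact Set.mem_iUnion.2 ⟨v, hv, hC, hc, hb⟩
  calc _ ≤ _ := Set.ncard_le_ncard hcover (Set.toFinite _)
    _ ≤ _ := Set.ncard_iUnion_le_of_fintype _
    _ ≤ ∑ _ : V, (b + c - 1).choose b := sum_le_sum fun v _ => ncard_connected_mem_le G v b c
    _ = _ := by rw [sum_const, card_univ, smul_eq_mul]

/-- Fomin–Villanger: the number of connected vertex subsets `C` with `|C| = c`
and `|N_G(C)| = b` is at most `n · binom(b + c − 1, b)`. -/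
theorem connected_subsets_count (G : SimpleGraph V) [DecidableRel G.Adj]
    (b c : ℕ) (hb : 0 < b) (hc : 0 < c) :
    {C : Finset V | (G.induce ((C : Finset V) : Set V)).Connected ∧
        C.card = c ∧ (gnbr G C).card = b}.ncard ≤
      Fintype.card V * Nat.choose (b + c - 1) b :=
  connected_subsets_count_general G b c
end

section
/- Let G be a graph with n vertices and let a and b be positive integers with b ≤ a ≤ n. Then the number of blocks B of G with |B| = a and |∂(B)| = b is at most min{ n · binom(a − 1, b), binom(n, a) }. -/
/-!
Counting blocks by a core vertex `v` costs the factor `n`. For the blocks `B` with `v ∈ κ(B)`,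
`|B| = a` and `|∂B| = b`, the pairs `(∂B, κ(B) ∖ {v})` are disjoint, of sizes `b` and
`a - 1 - b`, and cross-intersecting: if `∂B₁` missed `κ(B₂)`, the connected set `κ(B₂)` could
never leave `κ(B₁)` once it meets it at `v`, so the two cores, of equal size, would coincide and
`B₁ = N[κ(B₁)] = B₂`. Bollobás' set-pair inequality then allows at most `binom(a - 1, b)` such
blocks. The second bound only uses that blocks are `a`-subsets.

Bollobás' inequality `∑ 1 / binom(|Aᵢ| + |Cᵢ|, |Aᵢ|) ≤ 1` is proved by induction on the
ground set `S`: deleting `x ∈ S` keeps the pairs with `x ∉ Aᵢ` (shrinking `Cᵢ`), and summing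
the induction hypotheses over `x` returns `|S|` times the original sum.
-/

open Finset

universe u

variable {V : Type u} [DecidableEq V] [Fintype V]

/-- The boundary `∂(X)` : vertices of `X` having a neighbour outside `X`. -/
def gbnd (G : SimpleGraph V) [DecidableRel G.Adj] (X : Finset V) : Finset V :=
  X.filter (fun x => ∃ y, G.Adj x y ∧ y ∉ X)

/-- The core `κ(X) = X ∖ ∂(X)`. -/
def gcore (G : SimpleGraph V) [DecidableRel G.Adj] (X : Finset V) : Finset V :=
  X \ gbnd G X

/-- The closed neighbourhood `N[W]` of a vertex set `W`. -/
def nclosed (G : SimpleGraph V) [DecidableRel G.Adj] (W : Finset V) : Finset V :=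
  W ∪ Finset.univ.filter (fun y => ∃ x ∈ W, G.Adj x y)

/-- `B` is a block: `κ(B)` is nonempty, induces a connected subgraph, and
`B = N[κ(B)]`. -/
def IsBlock (G : SimpleGraph V) [DecidableRel G.Adj] (B : Finset V) : Prop :=
  (gcore G B).Nonempty ∧ (G.induce ((gcore G B : Finset V) : Set V)).Connected ∧
    B = nclosed G (gcore G B)

/-- `(B, 𝓑)` is a block derivation of the block `B` : `𝓑` is a set of blocks,
each contained in `B`, whose cores are pairwise disjoint. -/
def IsBlockDeriv (G : SimpleGraph V) [DecidableRel G.Adj]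
    (B : Finset V) (𝓑 : Finset (Finset V)) : Prop :=
  IsBlock G B ∧ (∀ A ∈ 𝓑, IsBlock G A ∧ A ⊆ B) ∧
    ∀ A₁ ∈ 𝓑, ∀ A₂ ∈ 𝓑, A₁ ≠ A₂ → gcore G A₁ ∩ gcore G A₂ = ∅

/-- `K(D) = ⋃_{A ∈ 𝓑} κ(A)`. -/
def KD (G : SimpleGraph V) [DecidableRel G.Adj] (𝓑 : Finset (Finset V)) : Finset V :=
  𝓑.sup (fun A => gcore G A)

/-- `S(D) = B ∖ K(D)`. -/
def SD (G : SimpleGraph V) [DecidableRel G.Adj] (B : Finset V)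
    (𝓑 : Finset (Finset V)) : Finset V :=
  B \ KD G 𝓑

namespace Finset

variable {ι α : Type*} [DecidableEq α]

private lemma natCast_mul_inv_choose_pred (a c : ℕ) (hc : 0 < c) :
    (c : ℚ) * ((a + (c - 1)).choose a : ℚ)⁻¹ = (a + c) * ((a + c).choose a : ℚ)⁻¹ := by
  have key := Nat.choose_mul_succ_eq (a + (c - 1)) a
  rw [show a + (c - 1) + 1 = a + c by omega, show a + c - a = c by omega] at key
  have h₁ : ((a + (c - 1)).choose a : ℚ) ≠ 0 := by exact_mod_cast (Nat.choose_pos (by omega)).ne'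
  have h₂ : ((a + c).choose a : ℚ) ≠ 0 := by exact_mod_cast (Nat.choose_pos (by omega)).ne'
  field_simp
  rw [mul_comm]
  exact_mod_cast key.symm

lemma sum_sdiff_inv_choose_card_erase {S A C : Finset α} (hAS : A ⊆ S) (hCS : C ⊆ S)
    (hAC : Disjoint A C) (hC : C.Nonempty) :
    ∑ x ∈ S \ A, ((#A + #(C.erase x)).choose #A : ℚ)⁻¹ = #S * ((#A + #C).choose #A : ℚ)⁻¹ := by
  set T := S \ A
  have hCT : C ⊆ T := subset_sdiff.2 ⟨hCS, hAC.symm⟩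
  have hin : ∑ x ∈ C, ((#A + #(C.erase x)).choose #A : ℚ)⁻¹ =
      #C * ((#A + (#C - 1)).choose #A : ℚ)⁻¹ := by
    rw [sum_congr rfl fun x hx => by rw [card_erase_of_mem hx], sum_const, nsmul_eq_mul]
  have hout : ∑ x ∈ T \ C, ((#A + #(C.erase x)).choose #A : ℚ)⁻¹ =
      #(T \ C) * ((#A + #C).choose #A : ℚ)⁻¹ := by
    rw [sum_congr rfl fun x hx => by rw [erase_eq_of_notMem (mem_sdiff.1 hx).2], sum_const,
      nsmul_eq_mul]
  have hcard : (#(T \ C) : ℚ) + #C + #A = #S := by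
    exact_mod_cast (congrArg (· + #A) (card_sdiff_add_card_eq_card hCT)).trans
      (card_sdiff_add_card_eq_card hAS)
  rw [← sum_sdiff hCT, hin, hout, natCast_mul_inv_choose_pred _ _ hC.card_pos]
  linear_combination ((#A + #C).choose #A : ℚ)⁻¹ * hcard

/-- Bollobás' set-pair inequality, in its LYM form. -/
theorem sum_inv_choose_le_one_of_inter_nonempty (S : Finset α) (𝓕 : Finset ι)
    (A C : ι → Finset α) (hS : ∀ i ∈ 𝓕, A i ⊆ S ∧ C i ⊆ S)
    (hAC : ∀ i ∈ 𝓕, Disjoint (A i) (C i))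
    (hcross : ∀ i ∈ 𝓕, ∀ j ∈ 𝓕, i ≠ j → (A i ∩ C j).Nonempty) :
    ∑ i ∈ 𝓕, ((#(A i) + #(C i)).choose #(A i) : ℚ)⁻¹ ≤ 1 := by
  induction S using Finset.strongInduction generalizing 𝓕 C with
  | H S ih =>
  by_cases hC : ∀ i ∈ 𝓕, (C i).Nonempty
  swap
  · push Not at hC
    obtain ⟨i, hi, hCi⟩ := hC
    have h𝓕 : 𝓕 ⊆ {i} := fun j hj => mem_singleton.2 <| by_contra fun hji => by
      simpa [hCi] using hcross j hj i hi hji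
    calc _ ≤ ∑ _j ∈ 𝓕, (1 : ℚ) :=
          sum_le_sum fun j _ => inv_le_one_of_one_le₀ (mod_cast Nat.choose_pos (by omega))
      _ ≤ 1 := by simpa using card_le_card h𝓕
  obtain rfl | ⟨i₀, hi₀⟩ := 𝓕.eq_empty_or_nonempty
  · simp
  have hSpos : (0 : ℚ) < #S :=
    mod_cast ((hC i₀ hi₀).mono (hS i₀ hi₀).2).card_pos
  have hstep : ∀ x ∈ S, ∑ i ∈ 𝓕 with x ∉ A i,
      ((#(A i) + #((C i).erase x)).choose #(A i) : ℚ)⁻¹ ≤ 1 := fun x hx =>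
    ih (S.erase x) (erase_ssubset hx) _ (fun i => (C i).erase x)
      (fun i hi => have hi := mem_filter.1 hi
        ⟨subset_erase.2 ⟨(hS i hi.1).1, hi.2⟩, erase_subset_erase x (hS i hi.1).2⟩)
      (fun i hi => (hAC i (mem_filter.1 hi).1).mono_right (erase_subset x _))
      (fun i hi j hj hij => by
        obtain ⟨y, hy⟩ := hcross i (mem_filter.1 hi).1 j (mem_filter.1 hj).1 hij
        have hyx : y ≠ x := fun h => (mem_filter.1 hi).2 (h ▸ (mem_inter.1 hy).1)
        exact ⟨y, mem_inter.2 ⟨(mem_inter.1 hy).1, mem_erase.2 ⟨hyx, (mem_inter.1 hy).2⟩⟩⟩)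
  have hswap : ∑ x ∈ S, ∑ i ∈ 𝓕 with x ∉ A i,
      ((#(A i) + #((C i).erase x)).choose #(A i) : ℚ)⁻¹ =
      ∑ i ∈ 𝓕, ∑ x ∈ S \ A i, ((#(A i) + #((C i).erase x)).choose #(A i) : ℚ)⁻¹ := by
    simp_rw [sum_filter, sdiff_eq_filter, sum_filter]
    exact sum_comm
  refine le_of_mul_le_mul_left ?_ hSpos
  calc (#S : ℚ) * ∑ i ∈ 𝓕, ((#(A i) + #(C i)).choose #(A i) : ℚ)⁻¹
      = ∑ i ∈ 𝓕, ∑ x ∈ S \ A i, ((#(A i) + #((C i).erase x)).choose #(A i) : ℚ)⁻¹ := by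
        rw [mul_sum]
        exact sum_congr rfl fun i hi => (sum_sdiff_inv_choose_card_erase (hS i hi).1
          (hS i hi).2 (hAC i hi) (hC i hi)).symm
    _ ≤ ∑ _x ∈ S, (1 : ℚ) := hswap ▸ sum_le_sum hstep
    _ = #S * 1 := by simp

theorem card_le_choose_of_inter_nonempty (𝓕 : Finset ι) (A C : ι → Finset α) {m p : ℕ}
    (hA : ∀ i ∈ 𝓕, #(A i) = p) (hAC_card : ∀ i ∈ 𝓕, #(A i) + #(C i) = m)
    (hAC : ∀ i ∈ 𝓕, Disjoint (A i) (C i))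
    (hcross : ∀ i ∈ 𝓕, ∀ j ∈ 𝓕, i ≠ j → (A i ∩ C j).Nonempty) :
    #𝓕 ≤ m.choose p := by
  obtain rfl | ⟨i₀, hi₀⟩ := 𝓕.eq_empty_or_nonempty
  · simp
  have hpos : (0 : ℚ) < m.choose p := mod_cast Nat.choose_pos (by grind)
  have h := sum_inv_choose_le_one_of_inter_nonempty (𝓕.biUnion fun i => A i ∪ C i) 𝓕 A C
    (fun i hi => union_subset_iff.1 (subset_biUnion_of_mem (fun i => A i ∪ C i) hi)) hAC hcross
  rw [sum_congr rfl fun i hi => by rw [hAC_card i hi, hA i hi], sum_const, nsmul_eq_mul,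
    ← div_eq_mul_inv, div_le_one hpos] at h
  exact_mod_cast h

end Finset

section Blocks

variable {G : SimpleGraph V} [DecidableRel G.Adj] {B₁ B₂ : Finset V} {v : V}

lemma card_gbnd_add_card_gcore (G : SimpleGraph V) [DecidableRel G.Adj] (B : Finset V) :
    #(gbnd G B) + #(gcore G B) = #B := by
  rw [add_comm]
  exact card_sdiff_add_card_eq_card (filter_subset _ _)

lemma disjoint_gbnd_gcore (G : SimpleGraph V) [DecidableRel G.Adj] (B : Finset V) :
    Disjoint (gbnd G B) (gcore G B) :=
  disjoint_sdiff

lemma mem_gcore_of_adj (hdisj : Disjoint (gbnd G B₁) (gcore G B₂)) {x y : V}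
    (hx : x ∈ gcore G B₁) (hadj : G.Adj x y) (hy : y ∈ gcore G B₂) : y ∈ gcore G B₁ := by
  rw [gcore, mem_sdiff] at hx ⊢
  have hyB₁ : y ∈ B₁ := by
    by_contra hyn
    exact hx.2 (mem_filter.2 ⟨hx.1, y, hadj, hyn⟩)
  exact ⟨hyB₁, fun hyb => disjoint_left.1 hdisj hyb hy⟩

lemma IsBlock.gcore_subset_gcore (h₂ : IsBlock G B₂) (hv₁ : v ∈ gcore G B₁)
    (hv₂ : v ∈ gcore G B₂) (hdisj : Disjoint (gbnd G B₁) (gcore G B₂)) :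
    gcore G B₂ ⊆ gcore G B₁ := by
  intro u hu
  obtain ⟨w⟩ := h₂.2.1.preconnected ⟨v, by simpa using hv₂⟩ ⟨u, by simpa using hu⟩
  have walk_mem : ∀ {s t : ((gcore G B₂ : Finset V) : Set V)},
      (G.induce ((gcore G B₂ : Finset V) : Set V)).Walk s t →
      (s : V) ∈ gcore G B₁ → (t : V) ∈ gcore G B₁ := by
    intro s t w
    induction w with
    | nil => exact id
    | cons hadj _ ih => exact fun hs => ih (mem_gcore_of_adj hdisj hs hadj (by simp))
  exact walk_mem w hv₁

lemma IsBlock.gbnd_inter_gcore_erase_nonempty (h₁ : IsBlock G B₁) (h₂ : IsBlock G B₂)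
    (hne : B₁ ≠ B₂) (hcard : #(gcore G B₁) ≤ #(gcore G B₂)) (hv₁ : v ∈ gcore G B₁)
    (hv₂ : v ∈ gcore G B₂) : (gbnd G B₁ ∩ (gcore G B₂).erase v).Nonempty := by
  by_contra hempty
  have hdisj : Disjoint (gbnd G B₁) (gcore G B₂) := by
    refine disjoint_left.2 fun x hx₁ hx₂ => hempty ⟨x, mem_inter.2 ⟨hx₁, mem_erase.2 ⟨?_, hx₂⟩⟩⟩
    rintro rfl
    exact disjoint_left.1 (disjoint_gbnd_gcore G B₁) hx₁ hv₁
  have hcore : gcore G B₂ = gcore G B₁ :=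
    eq_of_subset_of_card_le (h₂.gcore_subset_gcore hv₁ hv₂ hdisj) hcard
  exact hne (by rw [h₁.2.2, h₂.2.2, hcore])

open Classical in
lemma card_isBlock_mem_gcore_le (G : SimpleGraph V) [DecidableRel G.Adj] (a b : ℕ) (v : V) :
    #{B : Finset V | IsBlock G B ∧ #B = a ∧ #(gbnd G B) = b ∧ v ∈ gcore G B} ≤
      (a - 1).choose b := by
  refine card_le_choose_of_inter_nonempty _ (gbnd G) (fun B => (gcore G B).erase v)
    (fun B hB => (mem_filter.1 hB).2.2.2.1) (fun B hB => ?_)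
    (fun B _ => (disjoint_gbnd_gcore G B).mono_right (erase_subset v _))
    (fun B₁ hB₁ B₂ hB₂ hne => ?_)
  · obtain ⟨-, -, hcard, -, hv⟩ := mem_filter.1 hB
    have := card_gbnd_add_card_gcore G B
    have := card_pos.2 ⟨v, hv⟩
    rw [card_erase_of_mem hv]
    omega
  · obtain ⟨-, h₁, hcard₁, hbnd₁, hv₁⟩ := mem_filter.1 hB₁
    obtain ⟨-, h₂, hcard₂, hbnd₂, hv₂⟩ := mem_filter.1 hB₂
    have := card_gbnd_add_card_gcore G B₁
    have := card_gbnd_add_card_gcore G B₂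
    exact h₁.gbnd_inter_gcore_erase_nonempty h₂ hne (by omega) hv₁ hv₂

end Blocks

theorem blocks_count_general (G : SimpleGraph V) [DecidableRel G.Adj]
    (a b : ℕ) :
    {B : Finset V | IsBlock G B ∧ B.card = a ∧ (gbnd G B).card = b}.ncard ≤
      min (Fintype.card V * Nat.choose (a - 1) b)
        (Nat.choose (Fintype.card V) a) := by
  classical
  set 𝓣 : Finset (Finset V) := {B | IsBlock G B ∧ #B = a ∧ #(gbnd G B) = b}
  rw [show {B : Finset V | IsBlock G B ∧ #B = a ∧ #(gbnd G B) = b} = ↑𝓣 by ext; simp [𝓣],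
    Set.ncard_coe_finset]
  refine le_min ?_ ?_
  · calc #𝓣 ≤ #(univ.biUnion fun v =>
          {B : Finset V | IsBlock G B ∧ #B = a ∧ #(gbnd G B) = b ∧ v ∈ gcore G B}) :=
          card_le_card fun B hB => by
            obtain ⟨hB, hcard, hbnd⟩ := (mem_filter.1 hB).2
            obtain ⟨v, hv⟩ := hB.1
            simpa using ⟨hB, hcard, hbnd, v, hv⟩
      _ ≤ ∑ v : V, (a - 1).choose b :=
          card_biUnion_le.trans (sum_le_sum fun v _ => card_isBlock_mem_gcore_le G a b v)
      _ = Fintype.card V * (a - 1).choose b := by simp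
  · calc #𝓣 ≤ #(powersetCard a (univ : Finset V)) :=
          card_le_card fun B hB => mem_powersetCard_univ.2 (mem_filter.1 hB).2.2.1
      _ = (Fintype.card V).choose a := by rw [card_powersetCard, card_univ]

/-- The number of blocks `B` of `G` with `|B| = a` and `|∂(B)| = b` is at most
`min (n · binom(a − 1, b)) (binom(n, a))`. -/
theorem blocks_count (G : SimpleGraph V) [DecidableRel G.Adj]
    (a b : ℕ) (ha : 0 < a) (hb : 0 < b) (hba : b ≤ a) (han : a ≤ Fintype.card V) :
    {B : Finset V | IsBlock G B ∧ B.card = a ∧ (gbnd G B).card = b}.ncard ≤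
      min (Fintype.card V * Nat.choose (a - 1) b)
        (Nat.choose (Fintype.card V) a) :=
  blocks_count_general G a b
end
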